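/- arXiv:2006.07740 — 2 statements merged into one kernel-verified Lean document; each statement's English description precedes it below -/
import Mathlib

section
/- For any Hurst index H ∈ (0,1), the kernel R_H(a,b) = (1/2)(a^{2H} + b^{2H} - |a-b|^{2H}) is positive semidefinite on ℝ≥0: for any finite collection of points a_1,…,a_n ≥ 0 and real coefficients c_1,…,c_n, the sum ∑_{i,j} c_i c_j R_H(a_i, a_j) is nonnegative. -/
open MeasureTheory Real Set

noncomputable def RH (H a b : ℝ) : ℝ :=
  (a ^ (2 * H) + b ^ (2 * H) - |a - b| ^ (2 * H)) / 2

namespace FbmAux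

/-- The basic kernel function. -/
noncomputable def F (H t x : ℝ) : ℝ := (1 - Real.cos (t * x)) * x ^ (-(1 + 2 * H))

lemma F_integrable {H : ℝ} (hH : H ∈ Set.Ioo (0:ℝ) 1) (t : ℝ) :
    IntegrableOn (F H t) (Ioi 0) := by
  obtain ⟨h0, h1⟩ := hH
  have hmeas : Measurable (F H t) := by unfold F; fun_prop
  have hIoc : IntegrableOn (F H t) (Ioc 0 1) := by
    have hmaj : IntegrableOn (fun x : ℝ => t ^ 2 / 2 * x ^ (1 - 2 * H)) (Ioc 0 1) := by
      have : IntervalIntegrable (fun x : ℝ => x ^ (1 - 2 * H)) volume 0 1 :=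
        intervalIntegral.intervalIntegrable_rpow' (by linarith)
      exact ((intervalIntegrable_iff_integrableOn_Ioc_of_le (by norm_num)).mp this).const_mul _
    refine Integrable.mono hmaj hmeas.aestronglyMeasurable.restrict ?_
    filter_upwards [ae_restrict_mem measurableSet_Ioc] with x hx
    obtain ⟨hx0, hx1⟩ := hx
    have hxp : (0:ℝ) < x := hx0
    have hcos1 : 0 ≤ 1 - Real.cos (t * x) := by
      have := Real.cos_le_one (t * x); linarith
    have hcos2 : 1 - Real.cos (t * x) ≤ (t * x) ^ 2 / 2 := by
      have := Real.one_sub_sq_div_two_le_cos (x := t * x); linarith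
    have hxr : (0:ℝ) ≤ x ^ (-(1 + 2 * H)) := Real.rpow_nonneg hxp.le _
    have hFnn : 0 ≤ F H t x := mul_nonneg hcos1 hxr
    rw [Real.norm_eq_abs, Real.norm_eq_abs, abs_of_nonneg hFnn]
    have key : F H t x ≤ t ^ 2 / 2 * x ^ (1 - 2 * H) := by
      have h2 : F H t x ≤ (t * x) ^ 2 / 2 * x ^ (-(1 + 2 * H)) := by
        unfold F; exact mul_le_mul_of_nonneg_right hcos2 hxr
      have hx2 : (x:ℝ) ^ 2 * x ^ (-(1 + 2 * H)) = x ^ (1 - 2 * H) := by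
        rw [← Real.rpow_natCast x 2, ← Real.rpow_add hxp]
        norm_num
        congr 1
        ring
      calc F H t x ≤ (t * x) ^ 2 / 2 * x ^ (-(1 + 2 * H)) := h2
        _ = t ^ 2 / 2 * (x ^ 2 * x ^ (-(1 + 2 * H))) := by ring
        _ = t ^ 2 / 2 * x ^ (1 - 2 * H) := by rw [hx2]
    calc F H t x ≤ t ^ 2 / 2 * x ^ (1 - 2 * H) := key
      _ ≤ |t ^ 2 / 2 * x ^ (1 - 2 * H)| := le_abs_self _
  have hIoi : IntegrableOn (F H t) (Ioi 1) := by
    have hmaj : IntegrableOn (fun x : ℝ => 2 * x ^ (-(1 + 2 * H))) (Ioi 1) :=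
      (integrableOn_Ioi_rpow_of_lt (by linarith) one_pos).const_mul 2
    refine Integrable.mono hmaj hmeas.aestronglyMeasurable.restrict ?_
    filter_upwards [ae_restrict_mem measurableSet_Ioi] with x hx
    have hxp : (0:ℝ) < x := lt_trans one_pos hx
    have hcos1 : 0 ≤ 1 - Real.cos (t * x) := by
      have := Real.cos_le_one (t * x); linarith
    have hcos2 : 1 - Real.cos (t * x) ≤ 2 := by
      have := Real.neg_one_le_cos (t * x); linarith
    have hxr : (0:ℝ) ≤ x ^ (-(1 + 2 * H)) := Real.rpow_nonneg hxp.le _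
    have hFnn : 0 ≤ F H t x := mul_nonneg hcos1 hxr
    rw [Real.norm_eq_abs, Real.norm_eq_abs, abs_of_nonneg hFnn]
    calc F H t x ≤ 2 * x ^ (-(1 + 2 * H)) := by
          unfold F; exact mul_le_mul_of_nonneg_right hcos2 hxr
      _ ≤ |2 * x ^ (-(1 + 2 * H))| := le_abs_self _
  have : IntegrableOn (F H t) (Ioc 0 1 ∪ Ioi 1) := hIoc.union hIoi
  rwa [Ioc_union_Ioi_eq_Ioi (by norm_num : (0:ℝ) ≤ 1)] at this

/-- The normalizing constant. -/
noncomputable def K (H : ℝ) : ℝ := ∫ x in Ioi (0:ℝ), F H 1 x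

lemma F_nonneg {H t x : ℝ} (hx : 0 < x) : 0 ≤ F H t x := by
  have := Real.cos_le_one (t * x)
  exact mul_nonneg (by linarith) (Real.rpow_nonneg hx.le _)

lemma K_pos {H : ℝ} (hH : H ∈ Set.Ioo (0:ℝ) 1) : 0 < K H := by
  rw [K, setIntegral_pos_iff_support_of_nonneg_ae]
  · refine lt_of_lt_of_le ?_ (measure_mono ?_ : volume (Ioo (π/2) π) ≤ _)
    · rw [Real.volume_Ioo, ENNReal.ofReal_pos]
      linarith [Real.pi_pos]
    · intro x hx
      obtain ⟨hx1, hx2⟩ := hx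
      have hpi := Real.pi_pos
      have hxp : (0:ℝ) < x := lt_trans (by linarith) hx1
      constructor
      · have hcos : Real.cos x ≤ 0 :=
          Real.cos_nonpos_of_pi_div_two_le_of_le hx1.le (by linarith)
        have : 0 < F H 1 x := by
          unfold F
          rw [one_mul]
          exact mul_pos (by linarith) (Real.rpow_pos_of_pos hxp _)
        exact ne_of_gt this
      · exact hxp
  · filter_upwards [ae_restrict_mem measurableSet_Ioi] with x hx
    exact F_nonneg hx
  · exact F_integrable hH 1

lemma F_integral_scale {H : ℝ} (hH : H ∈ Set.Ioo (0:ℝ) 1) {t : ℝ} (ht : 0 < t) :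
    ∫ x in Ioi (0:ℝ), F H t x = t ^ (2 * H) * K H := by
  have h1 : t ^ (1 + 2 * H) * t ^ (-(1 + 2 * H)) = 1 := by
    rw [← Real.rpow_add ht, show (1 + 2 * H) + -(1 + 2 * H) = (0:ℝ) by ring, Real.rpow_zero]
  have key : ∀ x ∈ Ioi (0:ℝ), F H t x = t ^ (1 + 2 * H) * F H 1 (t * x) := by
    intro x hx
    have hx0 : (0:ℝ) < x := hx
    unfold F
    rw [one_mul, Real.mul_rpow ht.le hx0.le]
    linear_combination (-((1 - Real.cos (t * x)) * x ^ (-(1 + 2 * H)))) * h1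
  rw [setIntegral_congr_fun measurableSet_Ioi key, MeasureTheory.integral_const_mul,
    MeasureTheory.integral_comp_mul_left_Ioi (F H 1) 0 ht, mul_zero]
  rw [smul_eq_mul, ← mul_assoc]
  congr 1
  rw [← Real.rpow_neg_one t, ← Real.rpow_add ht]
  norm_num

noncomputable def J (H t : ℝ) : ℝ := ∫ x in Ioi (0:ℝ), F H t x

lemma J_eq {H : ℝ} (hH : H ∈ Set.Ioo (0:ℝ) 1) (t : ℝ) :
    J H t = |t| ^ (2 * H) * K H := by
  have hJ : ∀ s : ℝ, 0 < s → J H s = s ^ (2 * H) * K H := fun s hs =>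
    F_integral_scale hH hs
  rcases lt_trichotomy t 0 with h | h | h
  · have : J H t = J H (-t) := by
      unfold J F
      congr 1
      ext x
      rw [← Real.cos_neg (t * x), neg_mul]
    rw [this, hJ (-t) (by linarith), abs_of_neg h]
  · subst h
    have : J H 0 = 0 := by
      unfold J F
      simp
    rw [this, abs_zero, Real.zero_rpow (by nlinarith [hH.1] : 2 * H ≠ 0), zero_mul]
  · rw [hJ t h, abs_of_pos h]

end FbmAux

open FbmAux

theorem fbm_covariance_posSemidef (H : ℝ) (hH : H ∈ Set.Ioo (0:ℝ) 1)
    (n : ℕ) (a : Fin n → ℝ) (ha : ∀ i, 0 ≤ a i) (c : Fin n → ℝ) :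
    0 ≤ ∑ i, ∑ j, c i * c j * RH H (a i) (a j) := by
  have hK := K_pos hH
  have hint := F_integrable hH
  set f : Fin n → Fin n → ℝ → ℝ := fun i j x =>
    c i * c j * (F H (a i) x + F H (a j) x - F H (a i - a j) x) with hf
  have hfint : ∀ i j, IntegrableOn (f i j) (Ioi 0) := fun i j =>
    (((hint (a i)).add (hint (a j))).sub (hint (a i - a j))).const_mul _
  have hfi : ∀ i j, ∫ x in Ioi (0:ℝ), f i j x
      = c i * c j * (J H (a i) + J H (a j) - J H (a i - a j)) := by
    intro i j
    rw [hf]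
    simp only
    have hadd : IntegrableOn (fun x => F H (a i) x + F H (a j) x) (Ioi 0) :=
      (hint (a i)).add (hint (a j))
    rw [MeasureTheory.integral_const_mul, integral_sub hadd (hint _),
      integral_add (hint (a i)) (hint (a j))]
    rfl
  have key : K H * (2 * ∑ i, ∑ j, c i * c j * RH H (a i) (a j))
      = ∫ x in Ioi (0:ℝ), ∑ i, ∑ j, f i j x := by
    rw [integral_finset_sum _ (fun i _ => integrable_finset_sum _ (fun j _ => hfint i j))]
    have hswap : ∀ i j, ∫ x in Ioi (0:ℝ), f i j x
        = K H * (2 * (c i * c j * RH H (a i) (a j))) := by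
      intro i j
      rw [hfi, J_eq hH, J_eq hH, J_eq hH, abs_of_nonneg (ha i), abs_of_nonneg (ha j)]
      unfold RH
      ring
    have hin : ∀ i : Fin n, ∫ x in Ioi (0:ℝ), ∑ j, f i j x
        = ∑ j, ∫ x in Ioi (0:ℝ), f i j x :=
      fun i => integral_finset_sum _ (fun j _ => hfint i j)
    simp_rw [hin, hswap, ← Finset.mul_sum]
  have hpt : ∀ x ∈ Ioi (0:ℝ), 0 ≤ ∑ i, ∑ j, f i j x := by
    intro x hx
    have hxp : (0:ℝ) < x := hx
    have hxr : (0:ℝ) ≤ x ^ (-(1 + 2 * H)) := Real.rpow_nonneg hxp.le _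
    have expand : ∀ i j : Fin n, f i j x
        = (c i * (1 - Real.cos (a i * x))) * (c j * (1 - Real.cos (a j * x)))
            * x ^ (-(1 + 2 * H))
          + (c i * Real.sin (a i * x)) * (c j * Real.sin (a j * x))
            * x ^ (-(1 + 2 * H)) := by
      intro i j
      rw [hf]
      simp only
      unfold F
      rw [sub_mul (a i) (a j) x, Real.cos_sub]
      ring
    have hident : ∑ i, ∑ j, f i j x
        = ((∑ i, c i * (1 - Real.cos (a i * x))) ^ 2
            + (∑ i, c i * Real.sin (a i * x)) ^ 2) * x ^ (-(1 + 2 * H)) := by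
      simp_rw [expand, Finset.sum_add_distrib, ← Finset.sum_mul]
      rw [← Finset.sum_mul_sum, ← Finset.sum_mul_sum]
      ring
    rw [hident]
    positivity
  have hnn : 0 ≤ ∫ x in Ioi (0:ℝ), ∑ i, ∑ j, f i j x :=
    setIntegral_nonneg measurableSet_Ioi hpt
  rw [← key] at hnn
  nlinarith
end

section
/- Let s ≥ δ be real numbers. For all τ, ξ ∈ ℝ, with α = τ + ξ and β = τ − ξ, the hyperbolic Sobolev weight satisfies the two-sided bound: ⟨|τ|+|ξ|⟩^{2s} ⟨|τ|−|ξ|⟩^{2δ} is comparable (up to constants depending only on s and δ) to ⟨α⟩^{2s}⟨β⟩^{2δ} + ⟨β⟩^{2s}⟨α⟩^{2δ}. -/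
noncomputable def jap (x : ℝ) : ℝ := Real.sqrt (1 + x ^ 2)

lemma jap_one_le (x : ℝ) : 1 ≤ jap x := by
  unfold jap
  have := Real.sqrt_le_sqrt (show (1:ℝ) ≤ 1 + x ^ 2 by nlinarith [sq_nonneg x])
  simpa using this

lemma jap_eq_max (τ ξ : ℝ) : jap (|τ| + |ξ|) = max (jap (τ + ξ)) (jap (τ - ξ)) := by
  unfold jap
  rcases le_total 0 (τ * ξ) with h | h
  · rw [max_eq_left]
    · congr 1
      nlinarith [sq_abs τ, sq_abs ξ, abs_mul τ ξ, abs_of_nonneg h, abs_nonneg τ, abs_nonneg ξ]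
    · apply Real.sqrt_le_sqrt; nlinarith
  · rw [max_eq_right]
    · congr 1
      nlinarith [sq_abs τ, sq_abs ξ, abs_mul τ ξ, abs_of_nonpos h, abs_nonneg τ, abs_nonneg ξ]
    · apply Real.sqrt_le_sqrt; nlinarith

lemma jap_eq_min (τ ξ : ℝ) : jap (|τ| - |ξ|) = min (jap (τ + ξ)) (jap (τ - ξ)) := by
  unfold jap
  rcases le_total 0 (τ * ξ) with h | h
  · rw [min_eq_right]
    · congr 1
      nlinarith [sq_abs τ, sq_abs ξ, abs_mul τ ξ, abs_of_nonneg h, abs_nonneg τ, abs_nonneg ξ]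
    · apply Real.sqrt_le_sqrt; nlinarith
  · rw [min_eq_left]
    · congr 1
      nlinarith [sq_abs τ, sq_abs ξ, abs_mul τ ξ, abs_of_nonpos h, abs_nonneg τ, abs_nonneg ξ]
    · apply Real.sqrt_le_sqrt; nlinarith

lemma cross_ineq (a b p q : ℝ) (ha : 0 < a) (hab : a ≤ b) (hpq : q ≤ p) :
    a ^ p * b ^ q ≤ b ^ p * a ^ q := by
  have hb : 0 < b := lt_of_lt_of_le ha hab
  have h1 : a ^ (p - q) ≤ b ^ (p - q) :=
    Real.rpow_le_rpow ha.le hab (sub_nonneg.2 hpq)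
  have ha' : a ^ p = a ^ (p - q) * a ^ q := by
    rw [← Real.rpow_add ha]; ring_nf
  have hb' : b ^ p = b ^ (p - q) * b ^ q := by
    rw [← Real.rpow_add hb]; ring_nf
  rw [ha', hb']
  have hq1 : (0:ℝ) ≤ a ^ q := (Real.rpow_pos_of_pos ha q).le
  have hq2 : (0:ℝ) ≤ b ^ q := (Real.rpow_pos_of_pos hb q).le
  calc a ^ (p - q) * a ^ q * b ^ q ≤ b ^ (p - q) * a ^ q * b ^ q := by
        apply mul_le_mul_of_nonneg_right (mul_le_mul_of_nonneg_right h1 hq1) hq2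
    _ = b ^ (p - q) * b ^ q * a ^ q := by ring

theorem hyperbolic_weight_comparison (s δ : ℝ) (h : δ ≤ s) :
    ∃ c C : ℝ, 0 < c ∧ 0 < C ∧ ∀ τ ξ : ℝ,
      c * (jap (τ + ξ) ^ (2 * s) * jap (τ - ξ) ^ (2 * δ) +
            jap (τ - ξ) ^ (2 * s) * jap (τ + ξ) ^ (2 * δ)) ≤
        jap (|τ| + |ξ|) ^ (2 * s) * jap (|τ| - |ξ|) ^ (2 * δ) ∧
      jap (|τ| + |ξ|) ^ (2 * s) * jap (|τ| - |ξ|) ^ (2 * δ) ≤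
        C * (jap (τ + ξ) ^ (2 * s) * jap (τ - ξ) ^ (2 * δ) +
              jap (τ - ξ) ^ (2 * s) * jap (τ + ξ) ^ (2 * δ)) := by
  refine ⟨1/2, 1, by norm_num, by norm_num, fun τ ξ => ?_⟩
  have hs : 2 * δ ≤ 2 * s := by linarith
  rw [jap_eq_max, jap_eq_min]
  set A := jap (τ + ξ) with hA
  set B := jap (τ - ξ) with hB
  have hA1 : (0:ℝ) < A := lt_of_lt_of_le one_pos (jap_one_le _)
  have hB1 : (0:ℝ) < B := lt_of_lt_of_le one_pos (jap_one_le _)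
  rcases le_total A B with hab | hab
  · rw [max_eq_right hab, min_eq_left hab]
    have key : A ^ (2 * s) * B ^ (2 * δ) ≤ B ^ (2 * s) * A ^ (2 * δ) :=
      cross_ineq A B (2 * s) (2 * δ) hA1 hab hs
    constructor
    · linarith
    · have : (0:ℝ) ≤ A ^ (2 * s) * B ^ (2 * δ) :=
        mul_nonneg (Real.rpow_pos_of_pos hA1 _).le (Real.rpow_pos_of_pos hB1 _).le
      linarith
  · rw [max_eq_left hab, min_eq_right hab]
    have key : B ^ (2 * s) * A ^ (2 * δ) ≤ A ^ (2 * s) * B ^ (2 * δ) :=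
      cross_ineq B A (2 * s) (2 * δ) hB1 hab hs
    constructor
    · linarith
    · have : (0:ℝ) ≤ B ^ (2 * s) * A ^ (2 * δ) :=
        mul_nonneg (Real.rpow_pos_of_pos hB1 _).le (Real.rpow_pos_of_pos hA1 _).le
      linarith
end
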